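/- Over an algebraically closed field k of characteristic ≠ 2, 3, let E: y^2 = x^3 + 1 with Aut(E) ≅ μ6 generated by φ: (x,y) ↦ (η^2 x, η^3 y). Among the four cyclic order-3 subgroups of E[3], exactly one — namely G = {O, (0,1), (0,−1)} — is preserved by all of Aut(E); the stabilizer in Aut(E) of each of the other three order-3 subgroups is {±1} ≅ μ2. -/

import Mathlib

/-! The automorphism `(x, y) ↦ (u²x, u³y)` with `u⁶ = 1` has `u³ = ±1`, so it maps `(a, ±b)` to
`(u²a, ±b)`; hence it preserves `{(a, b), (a, -b)}` exactly when `u²a = a`. For `a = 0` this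
always holds, while for `a = ζʲc ≠ 0` it says `u² = 1`, i.e. `u = ±1`. -/

theorem pow_three_eq_one_or_neg_one_of_pow_six_eq_one {R : Type*} [Ring R] [NoZeroDivisors R]
    {u : R} (hu : u ^ 6 = 1) : u ^ 3 = 1 ∨ u ^ 3 = -1 :=
  sq_eq_one_iff.mp (by rw [← pow_mul]; exact hu)

theorem image_pair_eq_self_iff {R : Type*} [CommRing R] {u : R} (hu : u ^ 3 = 1 ∨ u ^ 3 = -1)
    (a b : R) :
    (fun p : R × R => (u ^ 2 * p.1, u ^ 3 * p.2)) '' {(a, b), (a, -b)} = {(a, b), (a, -b)} ↔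
      u ^ 2 * a = a := by
  constructor
  · intro h
    have hmem : (u ^ 2 * a, u ^ 3 * b) ∈ ({(a, b), (a, -b)} : Set (R × R)) :=
      h ▸ Set.mem_image_of_mem _ (Set.mem_insert _ _)
    rcases hmem with h' | h' <;> exact (Prod.ext_iff.mp h').1
  · intro ha
    rcases hu with h | h
    · simp [Set.image_insert_eq, ha, h]
    · simp [Set.image_insert_eq, ha, h, Set.pair_comm]

theorem stabilizers_of_order_three_subgroups_general {k : Type*} [Field k]
    (h2 : (2 : k) ≠ 0)
    (ζ c s : k) (hζ : IsPrimitiveRoot ζ 3) (hc : c ^ 3 = -4) :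
    ∀ u : k, u ^ 6 = 1 →
      ((fun p : k × k => (u ^ 2 * p.1, u ^ 3 * p.2)) '' {((0 : k), (1 : k)), (0, -1)}
          = {((0 : k), (1 : k)), (0, -1)}) ∧
      (∀ j : Fin 3,
        ((fun p : k × k => (u ^ 2 * p.1, u ^ 3 * p.2)) ''
            {(ζ ^ (j : ℕ) * c, s), (ζ ^ (j : ℕ) * c, -s)}
          = {(ζ ^ (j : ℕ) * c, s), (ζ ^ (j : ℕ) * c, -s)} ↔ u = 1 ∨ u = -1)) := by
  intro u hu
  have hu3 := pow_three_eq_one_or_neg_one_of_pow_six_eq_one hu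
  have hc0 : c ≠ 0 := by
    refine ne_zero_pow three_ne_zero (hc ▸ neg_ne_zero.mpr ?_)
    rw [show (4 : k) = 2 * 2 by norm_num]
    exact mul_ne_zero h2 h2
  refine ⟨(image_pair_eq_self_iff hu3 0 1).mpr (mul_zero _), fun j => ?_⟩
  have ha0 : ζ ^ (j : ℕ) * c ≠ 0 := mul_ne_zero (pow_ne_zero _ (hζ.ne_zero three_ne_zero)) hc0
  rw [image_pair_eq_self_iff hu3, mul_eq_right₀ ha0, sq_eq_one_iff]

/-- Over an algebraically closed field `k` of characteristic `≠ 2, 3`, consider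
`E : y² = x³ + 1` with `Aut(E) ≅ μ₆` acting by `φᵤ : (x,y) ↦ (u²x, u³y)` for `u⁶ = 1`.
The four cyclic order-3 subgroups of `E[3]` have affine point sets `{(0,±1)}` and
`{(ζʲc, ±s)}`, `j = 0,1,2`, where `ζ` is a primitive cube root of unity, `c³ = -4`,
`s² = -3`.  Exactly one of them, `G = {O, (0,1), (0,-1)}`, is preserved by all of
`Aut(E)`; the stabilizer of each of the other three is exactly `{±1} ≅ μ₂`. -/
theorem stabilizers_of_order_three_subgroups {k : Type*} [Field k] [IsAlgClosed k]
    (h2 : (2 : k) ≠ 0) (h3 : (3 : k) ≠ 0)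
    (ζ c s : k) (hζ : IsPrimitiveRoot ζ 3) (hc : c ^ 3 = -4) (hs : s ^ 2 = -3) :
    ∀ u : k, u ^ 6 = 1 →
      ((fun p : k × k => (u ^ 2 * p.1, u ^ 3 * p.2)) '' {((0 : k), (1 : k)), (0, -1)}
          = {((0 : k), (1 : k)), (0, -1)}) ∧
      (∀ j : Fin 3,
        ((fun p : k × k => (u ^ 2 * p.1, u ^ 3 * p.2)) ''
            {(ζ ^ (j : ℕ) * c, s), (ζ ^ (j : ℕ) * c, -s)}
          = {(ζ ^ (j : ℕ) * c, s), (ζ ^ (j : ℕ) * c, -s)} ↔ u = 1 ∨ u = -1)) :=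
  stabilizers_of_order_three_subgroups_general h2 ζ c s hζ hc
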